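/- For an FANBW A and word w with co-deterministic run DAG G^e_{w,A}, define the sequence of DAGs G⁰ = G^e_{w,A}, G^{2i+1} = G^{2i} minus its finite vertices, and G^{2i+2} = G^{2i+1} minus its F-free vertices. Then w ∉ L(A) if and only if G³ is empty; hence the maximum rank in the induced ranking of G^e_{w,A} is at most 2. -/

import Mathlib

open Classical

variable {Q : Type} {A : Type}

/-- A nondeterministic Büchi automaton on words (NBW). -/
structure NBW (Q : Type) (A : Type) where
  I : Set Q
  δ : Q → A → Set Q
  F : Set Q

namespace NBW

/-- Transition function extended to sets of states. -/
def δset (M : NBW Q A) (S : Set Q) (a : A) : Set Q := ⋃ q ∈ S, M.δ q a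

/-- A run of `M` on the word `w`. -/
def IsRun (M : NBW Q A) (w : ℕ → A) (ρ : ℕ → Q) : Prop :=
  ρ 0 ∈ M.I ∧ ∀ i, ρ (i + 1) ∈ M.δ (ρ i) (w i)

/-- An accepting run: a run visiting accepting states infinitely often. -/
def IsAccRun (M : NBW Q A) (w : ℕ → A) (ρ : ℕ → Q) : Prop :=
  M.IsRun w ρ ∧ ∀ n, ∃ m ≥ n, ρ m ∈ M.F

/-- `M` accepts the word `w`. -/
def Accepts (M : NBW Q A) (w : ℕ → A) : Prop := ∃ ρ, M.IsAccRun w ρ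

/-- `M` is finitely ambiguous (an FANBW): each word has finitely many accepting runs. -/
def FA (M : NBW Q A) : Prop := ∀ w : ℕ → A, {ρ | M.IsAccRun w ρ}.Finite

/-- Completeness of the transition function. -/
def Complete (M : NBW Q A) : Prop := ∀ (q : Q) (a : A), (M.δ q a).Nonempty

/-- Reverse determinism: each state has at most one `a`-predecessor. -/
def ReverseDet (M : NBW Q A) : Prop :=
  ∀ (q' : Q) (a : A), {q | q' ∈ M.δ q a}.Subsingleton

/-- The set of states at level `l` of the run DAG `G_{w,M}`. -/
def V (M : NBW Q A) (w : ℕ → A) : ℕ → Set Q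
  | 0 => M.I
  | l + 1 => M.δset (V M w l) (w l)

/-- Edge of the run DAG `G_{w,M}` from `⟨q,l⟩` to `⟨q',l+1⟩`. -/
def Edge (M : NBW Q A) (w : ℕ → A) (l : ℕ) (q q' : Q) : Prop :=
  q ∈ M.V w l ∧ q' ∈ M.δ q (w l)

/-- An ω-branch of the run DAG `G_{w,M}` (identified with its sequence of states). -/
def IsBranch (M : NBW Q A) (w : ℕ → A) (b : ℕ → Q) : Prop :=
  b 0 ∈ M.I ∧ ∀ l, M.Edge w l (b l) (b (l + 1))

/-- Edge of the co-deterministic run DAG `G^e_{w,M}`: only the edge from the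
minimal-index predecessor (w.r.t. the linear order enumerating `Q`) is kept. -/
def EdgeE [LinearOrder Q] (M : NBW Q A) (w : ℕ → A) (l : ℕ) (q q' : Q) : Prop :=
  IsLeast {p | p ∈ M.V w l ∧ q' ∈ M.δ p (w l)} q

/-- An ω-branch of the co-deterministic run DAG `G^e_{w,M}`. -/
def IsBranchE [LinearOrder Q] (M : NBW Q A) (w : ℕ → A) (b : ℕ → Q) : Prop :=
  b 0 ∈ M.I ∧ ∀ l, M.EdgeE w l (b l) (b (l + 1))

/-- A branch of `G^e_{w,M}` starting from vertex `⟨q,l⟩`. -/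
def BranchFromE [LinearOrder Q] (M : NBW Q A) (w : ℕ → A) (l : ℕ) (q : Q) (b : ℕ → Q) : Prop :=
  b 0 = q ∧ q ∈ M.V w l ∧ ∀ i, M.EdgeE w (l + i) (b i) (b (i + 1))

/-- The vertex `⟨q,l⟩` of `G^e_{w,M}` is finite: no infinite branch starts from it. -/
def FiniteVertexE [LinearOrder Q] (M : NBW Q A) (w : ℕ → A) (l : ℕ) (q : Q) : Prop :=
  ¬ ∃ b, M.BranchFromE w l q b

/-- The minimal set of predecessors `S_min` of `δ(S,b)` within `S`. -/
def Smin [LinearOrder Q] (M : NBW Q A) (S : Set Q) (b : A) : Set Q :=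
  {q | ∃ q' ∈ M.δset S b, IsLeast {p | p ∈ S ∧ q' ∈ M.δ p b} q}

/-- The reduced transition function `δ^e` for the level with state set `S` and letter `b`. -/
def δe [LinearOrder Q] (M : NBW Q A) (S : Set Q) (b : A) (S₁ : Set Q) : Set Q :=
  M.δset (S₁ ∩ M.Smin S b) b

/-- The reduced transition function at level `ℓ` of `G^e_{w,M}`. -/
def δeAt [LinearOrder Q] (M : NBW Q A) (w : ℕ → A) (ℓ : ℕ) (S₁ : Set Q) : Set Q :=
  M.δe (M.V w ℓ) (w ℓ) S₁

end NBW

section DAG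

variable (E : ℕ → Q → Q → Prop) (U : Set (Q × ℕ))

/-- An infinite branch from vertex `v` staying inside the vertex set `U`,
following the edge relation `E`. -/
def DagBranchIn (v : Q × ℕ) (b : ℕ → Q) : Prop :=
  b 0 = v.1 ∧ (∀ i, (b i, v.2 + i) ∈ U) ∧ ∀ i, E (v.2 + i) (b i) (b (i + 1))

/-- Vertex `v` is finite in the sub-DAG `U`: no infinite branch from `v` inside `U`. -/
def DagFiniteIn (v : Q × ℕ) : Prop := ¬ ∃ b, DagBranchIn E U v b

/-- One-step reachability inside `U`. -/
def DagStep (v v' : Q × ℕ) : Prop :=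
  v ∈ U ∧ v' ∈ U ∧ v'.2 = v.2 + 1 ∧ E v.2 v.1 v'.1

/-- Vertex `v` is F-free in `U`: not finite, and no F-vertex reachable from it in `U`. -/
def DagFFreeIn (F : Set Q) (v : Q × ℕ) : Prop :=
  ¬ DagFiniteIn E U v ∧ ∀ v', Relation.ReflTransGen (DagStep E U) v v' → v'.1 ∉ F

/-- The rank-stripping sequence of sub-DAGs: `G⁰ = G0`; `G^{2i+1}` removes the finite
vertices of `G^{2i}`; `G^{2i+2}` removes the F-free vertices of `G^{2i+1}`. -/
def DagStrip (F : Set Q) (G0 : Set (Q × ℕ)) : ℕ → Set (Q × ℕ)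
  | 0 => G0
  | i + 1 =>
      let U' := DagStrip F G0 i
      if i % 2 = 0 then U' \ {v | DagFiniteIn E U' v}
      else U' \ {v | DagFFreeIn E U' F v}

end DAG

namespace NBW

/-- The vertex set of the run DAG `G_{w,M}` (also of `G^e_{w,M}`). -/
def DagVertices (M : NBW Q A) (w : ℕ → A) : Set (Q × ℕ) := {v | v.1 ∈ M.V w v.2}

/-- Level rankings with maximum rank 2: `none` plays the role of `⊥`. -/
def IsLR (M : NBW Q A) (f : Q → Option (Fin 3)) : Prop :=
  ∀ q r, f q = some r → q ∈ M.F → (r : ℕ) % 2 = 0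

/-- Domain of a level ranking. -/
def rankDom (f : Q → Option (Fin 3)) : Set Q := {q | (f q).isSome}

/-- Coverage relation `f' ⪯^{δ^e}_a f` for level rankings. -/
def Covers [LinearOrder Q] (M : NBW Q A) (a : A) (f f' : Q → Option (Fin 3)) : Prop :=
  (∀ q r q', f q = some r → q' ∈ M.δe (rankDom f) a {q} →
    ∃ r', f' q' = some r' ∧ r' ≤ r) ∧
  (∀ q', (∀ q, q' ∈ M.δe (rankDom f) a {q} → f q = none) → f' q' = none)

/-- The rank-based complement of an FANBW, with maximum rank 2 and the reduced
transition function `δ^e`. -/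
noncomputable def rankComplement [LinearOrder Q] (M : NBW Q A) :
    NBW ((Q → Option (Fin 3)) × Set Q) A where
  I := {s | s.2 = ∅ ∧ ∀ q, s.1 q = if q ∈ M.I then some 2 else none}
  δ := fun s a =>
    {s' | M.Covers a s.1 s'.1 ∧ M.IsLR s'.1 ∧
      ((s.2 ≠ ∅ ∧
          s'.2 = M.δe (rankDom s.1) a s.2 \ {q | ∃ r, s'.1 q = some r ∧ (r : ℕ) % 2 = 1}) ∨
       (s.2 = ∅ ∧ s'.2 = {q | ∃ r, s'.1 q = some r ∧ (r : ℕ) % 2 = 0}))}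
  F := {s | s.2 = ∅}

/-- Slice-based DAG `G^s_{w,M}`: the set at position `p` of level `l`.
Level `0` consists of `I \ F` (position 0) and `I ∩ F` (position 1); from the
set at position `j` of level `l`, position `2j` of level `l+1` holds the non-`F`
successors and position `2j+1` the `F`-successors, keeping only the rightmost
occurrence of each state. -/
noncomputable def sliceSet (M : NBW Q A) (w : ℕ → A) : ℕ → ℕ → Set Q
  | 0, p => if p = 0 then M.I \ M.F else if p = 1 then M.I ∩ M.F else ∅
  | l + 1, p =>
      let S' : ℕ → Set Q := fun q =>
        if q % 2 = 0 then M.δset (sliceSet M w l (q / 2)) (w l) \ M.F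
        else M.δset (sliceSet M w l (q / 2)) (w l) ∩ M.F
      S' p \ ⋃ q ∈ Set.Ioi p, S' q

/-- An ω-branch of the slice-based DAG `G^s_{w,M}`, given by the positions it visits. -/
def IsSliceBranch (M : NBW Q A) (w : ℕ → A) (g : ℕ → ℕ) : Prop :=
  (∀ l, M.sliceSet w l (g l) ≠ ∅) ∧ ∀ l, g (l + 1) / 2 = g l

/-- There is an infinite branch of `G^s_{w,M}` starting from position `p` of level `l`. -/
def SliceBranchFrom (M : NBW Q A) (w : ℕ → A) (l p : ℕ) : Prop :=
  ∃ g : ℕ → ℕ, g 0 = p ∧ (∀ i, M.sliceSet w (l + i) (g i) ≠ ∅) ∧ ∀ i, g (i + 1) / 2 = g i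

/-- Accepting-phase transition of the `(N,C,B)` construction. -/
noncomputable def ncbStep [LinearOrder Q] (M : NBW Q A) (a : A)
    (t : Set Q × Set Q × Set Q) : Set Q × Set Q × Set Q :=
  (M.δe t.1 a t.1,
   M.δe t.1 a t.2.1 ∪ (M.δe t.1 a t.1 ∩ M.F),
   if t.2.2 = ∅ then M.δe t.1 a t.2.1 ∪ (M.δe t.1 a t.1 ∩ M.F) else M.δe t.1 a t.2.2)

/-- The slice-based specialized complement of an FANBW: the `(N,C,B)` construction. -/
noncomputable def ncbComplement [LinearOrder Q] (M : NBW Q A) :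
    NBW (Set Q ⊕ Set Q × Set Q × Set Q) A where
  I := {Sum.inl M.I}
  δ := fun s a =>
    match s with
    | Sum.inl S => {Sum.inl (M.δe S a S), Sum.inr (M.ncbStep a (S, S ∩ M.F, S ∩ M.F))}
    | Sum.inr t => {Sum.inr (M.ncbStep a t)}
  F := {s | ∃ t : Set Q × Set Q × Set Q, s = Sum.inr t ∧ t.2.2 = ∅}

/-- Trajectory of the deterministic accepting phase of the `(N,C,B)` construction. -/
noncomputable def ncbTraj [LinearOrder Q] (M : NBW Q A) (w : ℕ → A)
    (t₀ : Set Q × Set Q × Set Q) : ℕ → Set Q × Set Q × Set Q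
  | 0 => t₀
  | i + 1 => M.ncbStep (w i) (ncbTraj M w t₀ i)

end NBW

/-!
In the co-deterministic DAG every vertex has at most one predecessor, so choosing one
successor inside `G¹` for each vertex of `G¹` is injective from level `l` to level `l + 1`.
The levels of `G¹` thus have nondecreasing size, bounded by `|Q|`, and from some level on
each vertex of `G¹` has exactly one successor in `G¹`. Past that level every path of `G¹`
starting on a branch of `G²` stays on that branch; as the vertices of the branch are not
`F`-free in `G¹`, it visits `F` infinitely often, so a vertex of `G³` yields an accepting run.

Conversely, an accepting run `ρ` can be rerouted, up to any level `n`, along the unique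
backward path of `G^e` ending at `(ρ n, n)`. Since only finitely many runs accept, one of
these rerouted runs occurs for infinitely many `n`, so it is a branch of `G^e`; visiting `F`
infinitely often, it survives every stripping step.
-/

section DagStrip

variable (E : ℕ → Q → Q → Prop) (F : Set Q) (G0 : Set (Q × ℕ))

theorem dagStrip_one : DagStrip E F G0 1 = G0 \ {v | DagFiniteIn E G0 v} := rfl

theorem dagStrip_two :
    DagStrip E F G0 2 = DagStrip E F G0 1 \ {v | DagFFreeIn E (DagStrip E F G0 1) F v} := rfl

theorem dagStrip_three :
    DagStrip E F G0 3 = DagStrip E F G0 2 \ {v | DagFiniteIn E (DagStrip E F G0 2) v} := rfl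

theorem dagStrip_succ_subset (i : ℕ) : DagStrip E F G0 (i + 1) ⊆ DagStrip E F G0 i := by
  simp only [DagStrip]
  split_ifs <;> exact Set.sdiff_subset

variable {E} {U U' : Set (Q × ℕ)} {v : Q × ℕ} {b : ℕ → Q}

theorem DagBranchIn.mono (hb : DagBranchIn E U v b) (h : U ⊆ U') : DagBranchIn E U' v b :=
  ⟨hb.1, fun i => h (hb.2.1 i), hb.2.2⟩

theorem DagBranchIn.shift (hb : DagBranchIn E U v b) (j : ℕ) :
    DagBranchIn E U (b j, v.2 + j) (fun i => b (j + i)) := by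
  refine ⟨rfl, fun i => ?_, fun i => ?_⟩
  · simpa only [add_assoc] using hb.2.1 (j + i)
  · simpa only [add_assoc] using hb.2.2 (j + i)

theorem DagBranchIn.reflTransGen (hb : DagBranchIn E U v b) (j : ℕ) :
    Relation.ReflTransGen (DagStep E U) v (b j, v.2 + j) := by
  induction j with
  | zero => rw [hb.1]; exact .refl
  | succ j ih => exact ih.tail ⟨hb.2.1 j, hb.2.1 (j + 1), rfl, hb.2.2 j⟩

theorem dagBranchIn_of_path (hU : ∀ l, (b l, l) ∈ U) (hE : ∀ l, E l (b l) (b (l + 1)))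
    (l : ℕ) : DagBranchIn E U (b l, l) (fun i => b (l + i)) :=
  ⟨rfl, fun i => hU (l + i), fun i => hE (l + i)⟩

variable (E)

theorem mem_dagStrip_of_path (h0 : ∀ l, (b l, l) ∈ G0) (hE : ∀ l, E l (b l) (b (l + 1)))
    (hF : ∀ n, ∃ m ≥ n, b m ∈ F) (i l : ℕ) : (b l, l) ∈ DagStrip E F G0 i := by
  induction i generalizing l with
  | zero => exact h0 l
  | succ i ih =>
    have hb := dagBranchIn_of_path ih hE l
    simp only [DagStrip]
    split_ifs
    · exact Set.mem_sdiff_of_mem (ih l) (not_not_intro ⟨_, hb⟩)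
    · refine Set.mem_sdiff_of_mem (ih l) fun hfree => ?_
      obtain ⟨m, hlm, hmF⟩ := hF l
      refine hfree.2 _ (hb.reflTransGen (m - l)) ?_
      simpa only [Nat.add_sub_cancel' hlm] using hmF

theorem finite_or_fFree_or_finite_of_dagStrip_three_eq_empty (h3 : DagStrip E F G0 3 = ∅)
    (hv : v ∈ G0) :
    DagFiniteIn E (DagStrip E F G0 0) v ∨ DagFFreeIn E (DagStrip E F G0 1) F v ∨
      DagFiniteIn E (DagStrip E F G0 2) v := by
  by_contra! h
  obtain ⟨h0, h1, h2⟩ := h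
  have hv3 : v ∈ DagStrip E F G0 3 := ⟨⟨⟨hv, h0⟩, h1⟩, h2⟩
  simp [h3] at hv3

end DagStrip

def dagLevel (U : Set (Q × ℕ)) (l : ℕ) : Set Q := {q | (q, l) ∈ U}

section CoDeterministic

variable {E : ℕ → Q → Q → Prop} {F : Set Q} {G0 : Set (Q × ℕ)}

theorem exists_succ_mem_dagStrip_one {p : Q} {l : ℕ} (h : (p, l) ∈ DagStrip E F G0 1) :
    ∃ q, E l p q ∧ (q, l + 1) ∈ DagStrip E F G0 1 := by
  rw [dagStrip_one, Set.mem_sdiff, Set.mem_ofPred_eq, DagFiniteIn, not_not] at h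
  obtain ⟨-, b, hb⟩ := h
  refine ⟨b 1, by simpa only [hb.1, add_zero, zero_add] using hb.2.2 0, ?_⟩
  exact Set.mem_sdiff_of_mem (hb.2.1 1) (not_not_intro ⟨_, hb.shift 1⟩)

theorem exists_injOn_succ_dagStrip_one {l : ℕ} (hE : Relator.LeftUnique (E l)) :
    ∃ f : Q → Q,
      Set.MapsTo f (dagLevel (DagStrip E F G0 1) l) (dagLevel (DagStrip E F G0 1) (l + 1)) ∧
      Set.InjOn f (dagLevel (DagStrip E F G0 1) l) ∧
      ∀ p ∈ dagLevel (DagStrip E F G0 1) l, E l p (f p) := by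
  choose! f hf using fun p (hp : p ∈ dagLevel (DagStrip E F G0 1) l) =>
    exists_succ_mem_dagStrip_one hp
  exact ⟨f, fun p hp => (hf p hp).2,
    fun p hp p' hp' hpp' => hE (hf p hp).1 (hpp' ▸ (hf p' hp').1), fun p hp => (hf p hp).1⟩

theorem ncard_dagLevel_dagStrip_one_le_succ [Finite Q] {l : ℕ}
    (hE : Relator.LeftUnique (E l)) :
    (dagLevel (DagStrip E F G0 1) l).ncard ≤ (dagLevel (DagStrip E F G0 1) (l + 1)).ncard := by
  obtain ⟨f, hmaps, hinj, -⟩ := exists_injOn_succ_dagStrip_one (F := F) (G0 := G0) hE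
  exact Set.ncard_le_ncard_of_injOn f hmaps hinj

theorem eq_of_ncard_dagLevel_dagStrip_one_succ_le [Finite Q]
    {l : ℕ} (hE : Relator.LeftUnique (E l))
    (hl : (dagLevel (DagStrip E F G0 1) (l + 1)).ncard ≤ (dagLevel (DagStrip E F G0 1) l).ncard)
    {p q q' : Q} (hq : E l p q) (hq' : E l p q')
    (hq1 : (q, l + 1) ∈ DagStrip E F G0 1) (hq'1 : (q', l + 1) ∈ DagStrip E F G0 1) :
    q = q' := by
  obtain ⟨f, hmaps, hinj, hf⟩ := exists_injOn_succ_dagStrip_one (F := F) (G0 := G0) hE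
  have himage : f '' dagLevel (DagStrip E F G0 1) l = dagLevel (DagStrip E F G0 1) (l + 1) :=
    Set.eq_of_subset_of_ncard_le hmaps.image_subset (by rwa [hinj.ncard_image])
  have hsucc : ∀ r ∈ dagLevel (DagStrip E F G0 1) (l + 1), E l p r → r = f p := by
    intro r hr hpr
    obtain ⟨p', hp', rfl⟩ := himage.symm ▸ hr
    rw [hE (hf p' hp') hpr]
  exact (hsucc q hq1 hq).trans (hsucc q' hq'1 hq').symm

theorem exists_forall_ge_succ_unique_dagStrip_one [Finite Q]
    (hE : ∀ l, Relator.LeftUnique (E l)) :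
    ∃ S, ∀ l ≥ S, ∀ {p q q'}, E l p q → E l p q' →
      (q, l + 1) ∈ DagStrip E F G0 1 → (q', l + 1) ∈ DagStrip E F G0 1 → q = q' := by
  set c : ℕ → ℕ := fun l => (dagLevel (DagStrip E F G0 1) l).ncard
  have hmono : Monotone c :=
    monotone_nat_of_le_succ fun l => ncard_dagLevel_dagStrip_one_le_succ (hE l)
  have hbdd : BddAbove (Set.range c) :=
    ⟨Nat.card Q, by rintro _ ⟨l, rfl⟩; exact Set.ncard_le_card _⟩
  obtain ⟨S, hS⟩ := Nat.sSup_mem (Set.range_nonempty c) hbdd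
  refine ⟨S, fun l hl => eq_of_ncard_dagLevel_dagStrip_one_succ_le (hE l) ?_⟩
  calc c (l + 1) ≤ c S := hS ▸ le_csSup hbdd ⟨l + 1, rfl⟩
    _ ≤ c l := hmono hl

theorem DagBranchIn.eq_of_reflTransGen {U : Set (Q × ℕ)} {v : Q × ℕ} {b : ℕ → Q}
    (hb : DagBranchIn E U v b) {S : ℕ}
    (hS : ∀ l ≥ S, ∀ {p q q'}, E l p q → E l p q' → (q, l + 1) ∈ U → (q', l + 1) ∈ U → q = q')
    {j : ℕ} (hj : S ≤ v.2 + j) {u : Q × ℕ}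
    (hu : Relation.ReflTransGen (DagStep E U) (b j, v.2 + j) u) :
    ∃ j' ≥ j, u = (b j', v.2 + j') := by
  induction hu with
  | refl => exact ⟨j, le_rfl, rfl⟩
  | @tail _ u _ hstep ih =>
    obtain ⟨j', hj', rfl⟩ := ih
    obtain ⟨-, hu, hlev, hedge⟩ := hstep
    have hu : (u.1, v.2 + j' + 1) ∈ U := by rwa [← hlev]
    exact ⟨j' + 1, by omega, Prod.ext (hS _ (by omega) hedge (hb.2.2 j') hu (hb.2.1 (j' + 1))) hlev⟩

theorem exists_dagBranchIn_frequently_mem_of_mem_dagStrip_three [Finite Q]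
    (hE : ∀ l, Relator.LeftUnique (E l)) {v : Q × ℕ}
    (hv : v ∈ DagStrip E F G0 3) : ∃ b, DagBranchIn E G0 v b ∧ ∀ n, ∃ m ≥ n, b m ∈ F := by
  obtain ⟨S, hS⟩ := exists_forall_ge_succ_unique_dagStrip_one (F := F) (G0 := G0) hE
  rw [dagStrip_three, Set.mem_sdiff, Set.mem_ofPred_eq, DagFiniteIn, not_not] at hv
  obtain ⟨-, b, hb⟩ := hv
  have hb1 : DagBranchIn E (DagStrip E F G0 1) v b := hb.mono (dagStrip_succ_subset E F G0 1)
  refine ⟨b, hb1.mono (dagStrip_succ_subset E F G0 0), fun n => ?_⟩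
  have hnotFree : ¬ DagFFreeIn E (DagStrip E F G0 1) F (b (n + S), v.2 + (n + S)) := by
    have h2 := hb.2.1 (n + S)
    rw [dagStrip_two] at h2
    exact h2.2
  obtain ⟨u, hu, huF⟩ : ∃ u, Relation.ReflTransGen (DagStep E (DagStrip E F G0 1))
      (b (n + S), v.2 + (n + S)) u ∧ u.1 ∈ F := by
    by_contra! h
    exact hnotFree ⟨not_not_intro ⟨_, hb1.shift (n + S)⟩, h⟩
  obtain ⟨j', hj', rfl⟩ := hb1.eq_of_reflTransGen hS (by omega) hu
  exact ⟨j', by omega, huF⟩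

end CoDeterministic

namespace NBW

variable (M : NBW Q A) (w : ℕ → A)

variable {M w} in
theorem IsRun.mem_V {ρ : ℕ → Q} (hρ : M.IsRun w ρ) : ∀ n, ρ n ∈ M.V w n
  | 0 => hρ.1
  | n + 1 => Set.mem_biUnion (hρ.mem_V n) (hρ.2 n)

theorem isAccRun_splice {σ ρ : ℕ → Q} {n : ℕ} (hσ0 : σ 0 ∈ M.I)
    (hσ : ∀ m < n, σ (m + 1) ∈ M.δ (σ m) (w m)) (hn : σ n = ρ n)
    (hρ : ∀ m ≥ n, ρ (m + 1) ∈ M.δ (ρ m) (w m)) (hF : ∀ k, ∃ m ≥ k, ρ m ∈ M.F) :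
    M.IsAccRun w (fun m => if m ≤ n then σ m else ρ m) := by
  refine ⟨⟨by simpa using hσ0, fun m => ?_⟩, fun k => ?_⟩
  · rcases lt_trichotomy m n with hm | rfl | hm
    · simpa [hm.le, Nat.succ_le_of_lt hm] using hσ m hm
    · simpa [hn] using hρ m le_rfl
    · simpa [hm.not_ge, show ¬ m + 1 ≤ n by omega] using hρ m hm.le
  · obtain ⟨m, hm, hmF⟩ := hF (max k (n + 1))
    exact ⟨m, (le_max_left _ _).trans hm, by simpa [show ¬ m ≤ n by omega] using hmF⟩

variable [LinearOrder Q]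

theorem edgeE_leftUnique (l : ℕ) : Relator.LeftUnique (M.EdgeE w l) :=
  fun _ _ _ h h' => h.unique h'

theorem exists_edgeE_of_mem_V_succ [Finite Q] {l : ℕ} {q : Q} (h : q ∈ M.V w (l + 1)) :
    ∃ p, M.EdgeE w l p q := by
  obtain ⟨p, hp, hpq⟩ : ∃ p ∈ M.V w l, q ∈ M.δ p (w l) := by simpa [V, δset] using h
  obtain ⟨p₀, hp₀, hmin⟩ :=
    Set.exists_min_image {p | p ∈ M.V w l ∧ q ∈ M.δ p (w l)} id (Set.toFinite _) ⟨p, hp, hpq⟩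
  exact ⟨p₀, hp₀, hmin⟩

theorem exists_backPath [Finite Q] {l : ℕ} {q : Q} (h : q ∈ M.V w l) :
    ∃ σ : ℕ → Q, σ l = q ∧ σ 0 ∈ M.I ∧ ∀ m < l, M.EdgeE w m (σ m) (σ (m + 1)) := by
  induction l generalizing q with
  | zero => exact ⟨fun _ => q, rfl, h, fun m hm => absurd hm (Nat.not_lt_zero m)⟩
  | succ l ih =>
    obtain ⟨p, hp⟩ := M.exists_edgeE_of_mem_V_succ w h
    obtain ⟨σ, hσl, hσ0, hσ⟩ := ih hp.1.1
    refine ⟨Function.update σ (l + 1) q, by simp, by rwa [Function.update_of_ne (by omega)],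
      fun m hm => ?_⟩
    rcases Nat.lt_succ_iff_lt_or_eq.mp hm with hm | rfl
    · rw [Function.update_of_ne (by omega), Function.update_of_ne (by omega)]
      exact hσ m hm
    · rw [Function.update_of_ne (by omega), Function.update_self, hσl]
      exact hp

theorem accepts_of_dagBranchIn [Finite Q] {v : Q × ℕ} {b : ℕ → Q}
    (hb : DagBranchIn (M.EdgeE w) (M.DagVertices w) v b) (hF : ∀ n, ∃ m ≥ n, b m ∈ M.F) :
    M.Accepts w := by
  have hv : v.1 ∈ M.V w v.2 := hb.1 ▸ hb.2.1 0
  obtain ⟨σ, hσv, hσ0, hσ⟩ := M.exists_backPath w hv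
  refine ⟨_, M.isAccRun_splice w (ρ := fun m => b (m - v.2)) hσ0 (fun m hm => (hσ m hm).1.2)
    (by simp [hσv, hb.1]) (fun m hm => ?_) (fun k => ?_)⟩
  · have := (hb.2.2 (m - v.2)).1.2
    rwa [Nat.add_sub_cancel' hm, ← Nat.sub_add_comm hm] at this
  · obtain ⟨m, hm, hmF⟩ := hF k
    exact ⟨m + v.2, by omega, by simpa using hmF⟩

theorem exists_isAccRun_forall_lt_edgeE [Finite Q] {ρ : ℕ → Q} (hρ : M.IsAccRun w ρ)
    (n : ℕ) : ∃ τ, M.IsAccRun w τ ∧ ∀ m < n, M.EdgeE w m (τ m) (τ (m + 1)) := by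
  obtain ⟨σ, hσn, hσ0, hσ⟩ := M.exists_backPath w (hρ.1.mem_V n)
  refine ⟨_, M.isAccRun_splice w hσ0 (fun m hm => (hσ m hm).1.2) hσn (fun m _ => hρ.1.2 m) hρ.2,
    fun m hm => ?_⟩
  simpa [hm.le, Nat.succ_le_of_lt hm] using hσ m hm

theorem exists_isAccRun_edgeE [Finite Q] (hfin : {ρ | M.IsAccRun w ρ}.Finite)
    (hacc : M.Accepts w) : ∃ ρ, M.IsAccRun w ρ ∧ ∀ l, M.EdgeE w l (ρ l) (ρ (l + 1)) := by
  obtain ⟨ρ, hρ⟩ := hacc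
  choose τ hτ hτE using M.exists_isAccRun_forall_lt_edgeE w hρ
  have := hfin.to_subtype
  obtain ⟨t, ht⟩ :=
    Finite.exists_infinite_fiber fun n => (⟨τ n, hτ n⟩ : {ρ | M.IsAccRun w ρ})
  refine ⟨t, t.2, fun l => ?_⟩
  obtain ⟨n, hn, hln⟩ := (Set.infinite_coe_iff.mp ht).exists_gt l
  exact congrArg Subtype.val hn ▸ hτE n l hln

end NBW

/-- maximum rank of co-deterministic DAGs of FANBWs: with
`G⁰ = G^e_{w,M}`, `G^{2i+1} = G^{2i}` minus finite vertices and `G^{2i+2} = G^{2i+1}`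
minus `F`-free vertices, we have `w ∉ L(M)` iff `G³` is empty; hence, when `w ∉ L(M)`,
every vertex gets rank at most 2 (it is finite in `G⁰` or `G²`, or `F`-free in `G¹`). -/
theorem codet_dag_max_rank_two
    [Fintype Q] [LinearOrder Q] (M : NBW Q A) (hFA : M.FA) (w : ℕ → A) :
    (¬ M.Accepts w ↔ DagStrip (M.EdgeE w) M.F (M.DagVertices w) 3 = ∅) ∧
    (¬ M.Accepts w → ∀ v ∈ M.DagVertices w,
      DagFiniteIn (M.EdgeE w) (DagStrip (M.EdgeE w) M.F (M.DagVertices w) 0) v ∨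
      DagFFreeIn (M.EdgeE w) (DagStrip (M.EdgeE w) M.F (M.DagVertices w) 1) M.F v ∨
      DagFiniteIn (M.EdgeE w) (DagStrip (M.EdgeE w) M.F (M.DagVertices w) 2) v) := by
  have hiff : ¬ M.Accepts w ↔ DagStrip (M.EdgeE w) M.F (M.DagVertices w) 3 = ∅ := by
    refine ⟨fun hna => Set.eq_empty_of_forall_notMem fun v hv => ?_, fun h3 hacc => ?_⟩
    · obtain ⟨b, hb, hF⟩ :=
        exists_dagBranchIn_frequently_mem_of_mem_dagStrip_three (M.edgeE_leftUnique w) hv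
      exact hna (M.accepts_of_dagBranchIn w hb hF)
    · obtain ⟨ρ, hρ, hedge⟩ := M.exists_isAccRun_edgeE w (hFA w) hacc
      have h3ρ := mem_dagStrip_of_path (M.EdgeE w) M.F (M.DagVertices w)
        (fun l => (hedge l).1.1) hedge hρ.2 3 0
      rw [h3] at h3ρ
      exact h3ρ
  exact ⟨hiff, fun hna v hv =>
    finite_or_fFree_or_finite_of_dagStrip_three_eq_empty _ _ _ (hiff.mp hna) hv⟩
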